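/- arXiv:1108.3580 — 7 statements merged into one kernel-verified Lean document; each statement's English description precedes it below -/
import Mathlib

section
/- Let R be a commutative ring and let n be an odd natural number. If A is a symmetric n×n matrix over R (Aᵀ = A) all of whose diagonal entries lie in 2R (for every i there is b ∈ R with A i i = 2b), then det A lies in 2R, i.e. 2 divides det A in R. -/
/-!
Reduce modulo `2`: over a ring in which `2 = 0`, the Leibniz terms of `σ` and `σ⁻¹` coincide for a
symmetric matrix, so they cancel in pairs, and the remaining terms belong to involutions. In odd
dimension every involution has a fixed point `i`, and its term contains the factor `A i i = 0`.
-/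

open Matrix Equiv

theorem Equiv.Perm.exists_fixed_point_of_inv_eq_self {α : Type*} [Fintype α]
    (hα : Odd (Fintype.card α)) {σ : Perm α} (hσ : σ⁻¹ = σ) : ∃ a, σ a = a := by
  have : Fact (Nat.Prime 2) := ⟨Nat.prime_two⟩
  refine Perm.exists_fixed_point_of_prime (p := 2) (n := 1) ?_ ?_
  · rwa [← even_iff_two_dvd, Nat.not_even_iff_odd]
  · rw [pow_one, sq, ← inv_eq_iff_mul_eq_one, hσ]

theorem Matrix.prod_perm_inv_apply_of_transpose_eq {ι S : Type*} [Fintype ι] [CommMonoid S]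
    {M : Matrix ι ι S} (hM : Mᵀ = M) (σ : Perm ι) :
    ∏ i, M (σ⁻¹ i) i = ∏ i, M (σ i) i := by
  rw [← Equiv.prod_comp σ]
  refine Finset.prod_congr rfl fun i _ => ?_
  rw [Perm.inv_def, symm_apply_apply, ← transpose_apply M, hM]

theorem Matrix.det_eq_zero_of_transpose_eq_of_diag_eq_zero {ι S : Type*} [Fintype ι]
    [DecidableEq ι] [CommRing S] (h2 : (2 : S) = 0) (hι : Odd (Fintype.card ι))
    {M : Matrix ι ι S} (hM : Mᵀ = M) (hdiag : ∀ i, M i i = 0) : M.det = 0 := by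
  rw [det_apply]
  refine Finset.sum_involution (fun σ _ => σ⁻¹) (fun σ _ => ?_) (fun σ _ hσ hinv => ?_)
    (fun _ _ => Finset.mem_univ _) (fun σ _ => inv_inv σ)
  · rw [Perm.sign_inv, prod_perm_inv_apply_of_transpose_eq hM, ← two_mul, h2, zero_mul]
  · obtain ⟨a, ha⟩ := Perm.exists_fixed_point_of_inv_eq_self hι hinv
    exact hσ <| by rw [Finset.prod_eq_zero (Finset.mem_univ a) (by rw [ha, hdiag]), smul_zero]

/-- If `A` is a symmetric `n × n` matrix over a commutative ring `R`
with `n` odd and every diagonal entry of `A` lying in `2R`, then `2 ∣ det A`. -/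
theorem det_dvd_two_of_symm_even_diag {R : Type*} [CommRing R] {n : ℕ} (hn : Odd n)
    (A : Matrix (Fin n) (Fin n) R) (hsym : Aᵀ = A)
    (hdiag : ∀ i, ∃ b : R, A i i = 2 * b) :
    (2 : R) ∣ A.det := by
  let I : Ideal R := Ideal.span {2}
  let π := Ideal.Quotient.mk I
  have h2 : (2 : R ⧸ I) = 0 := by
    rw [← map_ofNat π 2]
    exact Ideal.Quotient.eq_zero_iff_mem.mpr (Ideal.mem_span_singleton_self 2)
  have hdiag' : ∀ i, A.map π i i = 0 := fun i => by
    obtain ⟨b, hb⟩ := hdiag i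
    rw [map_apply, hb, map_mul, map_ofNat, h2, zero_mul]
  have hdet : π A.det = 0 := by
    rw [RingHom.map_det]
    refine det_eq_zero_of_transpose_eq_of_diag_eq_zero h2 ?_ ?_ hdiag'
    · rwa [Fintype.card_fin]
    · rw [RingHom.mapMatrix_apply, ← transpose_map, hsym]
  exact Ideal.mem_span_singleton.mp (Ideal.Quotient.eq_zero_iff_mem.mp hdet)
end

section
/- Let n be an odd positive natural number. Then the ideal of ℤ generated by the set of determinants of all symmetric n×n integer matrices with even diagonal equals the ideal 2ℤ: every such determinant is divisible by 2, and there exists such a matrix whose determinant is ±2. -/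
/-!
Reduced modulo `2`, a symmetric integer matrix with even diagonal becomes a symmetric matrix with
zero diagonal in characteristic `2`, and such a matrix has vanishing determinant in odd dimension.
Conversely, for `n = 2k + 1` the permutation matrix of `i ↦ n - 1 - i`, whose only fixed point is
`k`, becomes symmetric with even diagonal and determinant `±2` once its `(k, k)` entry is doubled.
-/

open Matrix

theorem Fin.rev_eq_self_iff {k : ℕ} (i : Fin (2 * k + 1)) : i.rev = i ↔ i = ⟨k, by omega⟩ := by
  simp only [Fin.ext_iff, Fin.val_rev]
  omega

namespace Matrix

theorem prod_perm_inv_apply_eq_of_isSymm {ι M : Type*} [Fintype ι] [CommMonoid M]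
    {A : Matrix ι ι M} (hA : A.IsSymm) (σ : Equiv.Perm ι) :
    ∏ i, A (σ⁻¹ i) i = ∏ i, A (σ i) i :=
  Fintype.prod_equiv σ⁻¹ _ _ fun i => by
    rw [← Equiv.Perm.mul_apply, mul_inv_cancel, Equiv.Perm.one_apply]
    exact (hA.apply _ _).symm

variable {ι R : Type*} [Fintype ι] [DecidableEq ι] [CommRing R]

/-- Pairing each permutation with its inverse, the Leibniz expansion cancels in characteristic `2`
except for the involutions, which in odd dimension fix an index and hence meet the zero diagonal. -/
theorem det_eq_zero_of_isSymm_of_diag_eq_zero [CharP R 2] (hι : Odd (Fintype.card ι))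
    {A : Matrix ι ι R} (hA : A.IsSymm) (hdiag : ∀ i, A i i = 0) : A.det = 0 := by
  rw [det_apply]
  refine Finset.sum_involution (fun σ _ => σ⁻¹) (fun σ _ => ?_) (fun σ _ hσ hinv => hσ ?_)
    (fun _ _ => Finset.mem_univ _) (fun σ _ => inv_inv σ)
  · rw [Equiv.Perm.sign_inv, prod_perm_inv_apply_eq_of_isSymm hA]
    exact CharTwo.add_self_eq_zero _
  · have hsq : σ ^ 2 ^ 1 = 1 := by
      rw [pow_one, sq]
      nth_rewrite 1 [← hinv]
      exact inv_mul_cancel σ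
    obtain ⟨j, hj⟩ := Equiv.Perm.exists_fixed_point_of_prime hι.not_two_dvd_nat hsq
    rw [Finset.prod_eq_zero (Finset.mem_univ j) (by rw [hj, hdiag]), smul_zero]

theorem two_dvd_det_of_isSymm (hι : Odd (Fintype.card ι)) {A : Matrix ι ι ℤ} (hA : A.IsSymm)
    (hdiag : ∀ i, 2 ∣ A i i) : 2 ∣ A.det := by
  refine (ZMod.intCast_zmod_eq_zero_iff_dvd A.det 2).mp ?_
  rw [← eq_intCast (Int.castRingHom (ZMod 2)), RingHom.map_det]
  exact det_eq_zero_of_isSymm_of_diag_eq_zero hι (hA.map _) fun i =>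
    (ZMod.intCast_zmod_eq_zero_iff_dvd _ 2).mpr (hdiag i)

theorem permMatrix_mul_diagonal_apply (σ : Equiv.Perm ι) (d : ι → R) (i j : ι) :
    (σ.permMatrix R * diagonal d) i j = if σ i = j then d j else 0 := by
  simp [mul_diagonal, Equiv.toPEquiv_apply, PEquiv.toMatrix_apply]

theorem isSymm_permMatrix_mul_diagonal {σ : Equiv.Perm ι} (hσ : Function.Involutive σ)
    {d : ι → R} (hd : ∀ i, d (σ i) = d i) : (σ.permMatrix R * diagonal d).IsSymm := by
  ext i j
  rw [transpose_apply, permMatrix_mul_diagonal_apply, permMatrix_mul_diagonal_apply]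
  by_cases hij : σ i = j
  · rw [if_pos hij, if_pos (by rw [← hij, hσ]), ← hij, hd]
  · rw [if_neg hij, if_neg fun hji => hij (by rw [← hji, hσ])]

/-- The matrix of an involution with a single fixed point `m`, with the entry at `(m, m)`
doubled. -/
theorem exists_isSymm_two_dvd_diag_det_eq_two {σ : Equiv.Perm ι} (hσ : Function.Involutive σ)
    {m : ι} (hfix : ∀ i, σ i = i ↔ i = m) :
    ∃ A : Matrix ι ι R, A.IsSymm ∧ (∀ i, 2 ∣ A i i) ∧ (A.det = 2 ∨ A.det = -2) := by
  set d : ι → R := Function.update 1 m 2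
  have hm : σ m = m := (hfix m).mpr rfl
  have hd : ∀ i, d (σ i) = d i := by
    intro i
    by_cases him : i = m
    · rw [him, hm]
    · have hσim : σ i ≠ m := fun h => him (by rw [← hσ i, h, hm])
      simp only [d, Function.update_of_ne him, Function.update_of_ne hσim, Pi.one_apply]
  refine ⟨σ.permMatrix R * diagonal d, isSymm_permMatrix_mul_diagonal hσ hd, fun i => ?_, ?_⟩
  · rw [permMatrix_mul_diagonal_apply]
    split_ifs with hi
    · simp only [(hfix i).mp hi, d, Function.update_self, dvd_refl]
    · exact dvd_zero 2
  · have hprod : ∏ i, d i = 2 := by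
      rw [Finset.prod_update_of_mem (Finset.mem_univ m)]
      simp
    rw [det_mul, det_permutation, det_diagonal, hprod]
    rcases Int.units_eq_one_or (Equiv.Perm.sign σ) with hs | hs <;> simp [hs]

theorem exists_isSymm_two_dvd_diag_det_eq_two_of_odd {n : ℕ} (hn : Odd n) :
    ∃ A : Matrix (Fin n) (Fin n) R, A.IsSymm ∧ (∀ i, 2 ∣ A i i) ∧ (A.det = 2 ∨ A.det = -2) := by
  obtain ⟨k, rfl⟩ := hn
  exact exists_isSymm_two_dvd_diag_det_eq_two (σ := Fin.revPerm) Fin.rev_involutive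
    Fin.rev_eq_self_iff

end Matrix

theorem spanDetSymmEvenDiag_eq_two_of_odd_general (n : ℕ) (hodd : Odd n) :
    Ideal.span {d : ℤ | ∃ A : Matrix (Fin n) (Fin n) ℤ,
        Aᵀ = A ∧ (∀ i, ∃ b : ℤ, A i i = 2 * b) ∧ A.det = d} = Ideal.span {2} ∧
    (∀ A : Matrix (Fin n) (Fin n) ℤ, Aᵀ = A → (∀ i, ∃ b : ℤ, A i i = 2 * b) →
      (2 : ℤ) ∣ A.det) ∧
    ∃ A : Matrix (Fin n) (Fin n) ℤ,
      Aᵀ = A ∧ (∀ i, ∃ b : ℤ, A i i = 2 * b) ∧ (A.det = 2 ∨ A.det = -2) := by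
  have hcard : Odd (Fintype.card (Fin n)) := by rwa [Fintype.card_fin]
  have hdvd : ∀ A : Matrix (Fin n) (Fin n) ℤ, Aᵀ = A → (∀ i, 2 ∣ A i i) → 2 ∣ A.det :=
    fun A hA hdiag => two_dvd_det_of_isSymm hcard hA hdiag
  obtain ⟨A, hA, hdiag, hdet⟩ := exists_isSymm_two_dvd_diag_det_eq_two_of_odd (R := ℤ) hodd
  refine ⟨le_antisymm ?_ ?_, hdvd, A, hA, hdiag, hdet⟩
  · rw [Ideal.span_le]
    rintro _ ⟨B, hB, hBdiag, rfl⟩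
    exact Ideal.mem_span_singleton.mpr (hdvd B hB hBdiag)
  · rw [← Ideal.span_singleton_eq_span_singleton.mpr (Int.associated_iff.mpr hdet)]
    exact Ideal.span_mono (Set.singleton_subset_iff.mpr ⟨A, hA, hdiag, rfl⟩)

/-- For `n` odd (and positive), the ideal of `ℤ` generated by the
determinants of all symmetric `n × n` integer matrices with even diagonal equals `2ℤ`:
every such determinant is divisible by `2`, and some such matrix has determinant `±2`. -/
theorem spanDetSymmEvenDiag_eq_two_of_odd (n : ℕ) (hpos : 0 < n) (hodd : Odd n) :
    Ideal.span {d : ℤ | ∃ A : Matrix (Fin n) (Fin n) ℤ,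
        Aᵀ = A ∧ (∀ i, ∃ b : ℤ, A i i = 2 * b) ∧ A.det = d} = Ideal.span {2} ∧
    (∀ A : Matrix (Fin n) (Fin n) ℤ, Aᵀ = A → (∀ i, ∃ b : ℤ, A i i = 2 * b) →
      (2 : ℤ) ∣ A.det) ∧
    ∃ A : Matrix (Fin n) (Fin n) ℤ,
      Aᵀ = A ∧ (∀ i, ∃ b : ℤ, A i i = 2 * b) ∧ (A.det = 2 ∨ A.det = -2) :=
  spanDetSymmEvenDiag_eq_two_of_odd_general n hodd
end

section
/- Let A and M be commutative groups (written multiplicatively) and let h : A → A → M be symmetric (h a b = h b a for all a, b) and multiplicative in each variable (h a (b·c) = (h a b)·(h a c) for all a, b, c). Then for every n ∈ ℕ, every u ∈ A, and every a : Fin n → A, one has ∏_{i<j} h (u·a i) (u·a j) = (h u u)^{n(n−1)/2} · ( h u (∏_i a i) )^{n−1} · ∏_{i<j} h (a i) (a j). -/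
/-!
Bimultiplicativity and symmetry give `h (u x) (u y) = h u u · h u x · h u y · h x y`. Over the
`n(n-1)/2` pairs `i < j`, the factor `h u u` appears once per pair, and each `h u (a i)` appears
once for every `j ≠ i`, i.e. `n - 1` times.
-/

open Finset

theorem prod_filter_ne_fst {ι M : Type*} [Fintype ι] [DecidableEq ι] [CommMonoid M]
    (f : ι → M) :
    ∏ p ∈ univ.filter (fun p : ι × ι => p.1 ≠ p.2), f p.1 =
      (∏ i, f i) ^ (Fintype.card ι - 1) := by
  have hrow (i : ι) : ∏ j ∈ univ.filter (fun j => i ≠ j), f i = f i ^ (Fintype.card ι - 1) := by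
    rw [prod_const, filter_ne, card_erase_of_mem (mem_univ i), card_univ]
  rw [prod_filter, Fintype.prod_prod_type, ← prod_pow]
  simp_rw [← prod_filter]
  exact prod_congr rfl fun i _ => hrow i

section OrderedPairs

variable {ι M : Type*} [Fintype ι] [LinearOrder ι] [CommMonoid M]

theorem prod_filter_lt_mul_prod_filter_gt (F : ι × ι → M) :
    (∏ p ∈ univ.filter (fun p : ι × ι => p.1 < p.2), F p) *
        ∏ p ∈ univ.filter (fun p : ι × ι => p.2 < p.1), F p =
      ∏ p ∈ univ.filter (fun p : ι × ι => p.1 ≠ p.2), F p := by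
  have hdisj : Disjoint (univ.filter (fun p : ι × ι => p.1 < p.2))
      (univ.filter (fun p : ι × ι => p.2 < p.1)) :=
    disjoint_filter.2 fun _ _ hlt hgt => lt_asymm hlt hgt
  rw [← prod_union hdisj, ← filter_or]
  congr 1
  ext p
  simp [lt_or_lt_iff_ne]

theorem prod_filter_gt_eq_prod_filter_lt_swap (F : ι × ι → M) :
    ∏ p ∈ univ.filter (fun p : ι × ι => p.2 < p.1), F p =
      ∏ p ∈ univ.filter (fun p : ι × ι => p.1 < p.2), F p.swap :=
  prod_equiv (Equiv.prodComm ι ι) (by simp) (by simp)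

theorem prod_filter_lt_mul (f : ι → M) :
    ∏ p ∈ univ.filter (fun p : ι × ι => p.1 < p.2), f p.1 * f p.2 =
      (∏ i, f i) ^ (Fintype.card ι - 1) := by
  classical
  rw [prod_mul_distrib, ← prod_filter_ne_fst, ← prod_filter_lt_mul_prod_filter_gt,
    prod_filter_gt_eq_prod_filter_lt_swap]
  rfl

end OrderedPairs

section SymmetricPairing

variable {A M : Type*} {h : A → A → M}

theorem pairing_mul_left [Mul A] [Mul M] (hsymm : ∀ a b, h a b = h b a)
    (hmul : ∀ a b c, h a (b * c) = h a b * h a c) (a b c : A) :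
    h (a * b) c = h a c * h b c := by
  rw [hsymm, hmul, hsymm c a, hsymm c b]

theorem pairing_mul_mul [Mul A] [CommSemigroup M] (hsymm : ∀ a b, h a b = h b a)
    (hmul : ∀ a b c, h a (b * c) = h a b * h a c) (u x y : A) :
    h (u * x) (u * y) = h u u * (h u x * h u y) * h x y := by
  rw [hmul, pairing_mul_left hsymm hmul, pairing_mul_left hsymm hmul, hsymm x u]
  ac_rfl

end SymmetricPairing

/-- (Lemma 5.6, scaling a symmetric bimultiplicative pairing.)
If `h : A → A → M` is symmetric and multiplicative in each variable, then for all `n`,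
`u` and `a : Fin n → A`,
`∏_{i<j} h (u * a i) (u * a j)
  = (h u u) ^ (n(n-1)/2) * (h u (∏ i, a i)) ^ (n-1) * ∏_{i<j} h (a i) (a j)`. -/
theorem prod_pairs_scaled_pairing {A M : Type*} [CommGroup A] [CommGroup M]
    (h : A → A → M) (hsymm : ∀ a b, h a b = h b a)
    (hmul : ∀ a b c, h a (b * c) = h a b * h a c)
    (n : ℕ) (u : A) (a : Fin n → A) :
    (∏ p ∈ Finset.univ.filter (fun p : Fin n × Fin n => p.1 < p.2),
        h (u * a p.1) (u * a p.2))
      = (h u u) ^ (n * (n - 1) / 2) * (h u (∏ i, a i)) ^ (n - 1) *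
        ∏ p ∈ Finset.univ.filter (fun p : Fin n × Fin n => p.1 < p.2),
          h (a p.1) (a p.2) := by
  have hprod : ∏ i, h u (a i) = h u (∏ i, a i) :=
    (map_prod (MonoidHom.mk' (h u) (hmul u)) a univ).symm
  simp_rw [pairing_mul_mul hsymm hmul u]
  rw [prod_mul_distrib, prod_mul_distrib, prod_const, Fintype.card_product_filter_lt,
    Fintype.card_fin, Nat.choose_two_right, prod_filter_lt_mul (fun i => h u (a i)),
    Fintype.card_fin, hprod]
end

section
/- Let F be a field of characteristic ≠ 2 and K a field extension of F with finrank F K = 2, and let σ be the unique nontrivial F-algebra automorphism of K. If γ : K → K is an F-linear map satisfying Norm_{K/F}(γ x) = Norm_{K/F}(x) for all x ∈ K, then there exists α ∈ K with Norm_{K/F}(α) = 1 such that either γ x = α·x for all x ∈ K, or γ x = α·σ(x) for all x ∈ K. -/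
/-! Since `σ ≠ 1` and `|Aut(K/F)| ≤ [K : F] = 2`, the extension is Galois with group `{1, σ}`, so
`N(x) = x σ(x)`. An isometry `γ` thus satisfies `γ(x) σ(γ(x)) = x σ(x)`; polarizing at `x` and `1`
with `α = γ(1)` (so `α σ(α) = 1`) gives `(γ(x) - α x)(γ(x) - α σ(x)) = 0` for every `x`. Both
alternatives define additive subgroups, and a group is not the union of two proper subgroups. -/

theorem AddMonoidHom.eq_or_eq_of_forall_eq_or_eq {G H : Type*} [AddZeroClass G] [AddZeroClass H]
    [IsCancelAdd H] {f g h : G →+ H} (hfgh : ∀ x, f x = g x ∨ f x = h x) : f = g ∨ f = h := by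
  by_contra! ⟨hg, hh⟩
  obtain ⟨a, ha⟩ := DFunLike.ne_iff.mp hg
  obtain ⟨b, hb⟩ := DFunLike.ne_iff.mp hh
  have hah : f a = h a := (hfgh a).resolve_left ha
  have hbg : f b = g b := (hfgh b).resolve_right hb
  rcases hfgh (a + b) with hab | hab
  · rw [map_add, map_add, hbg] at hab
    exact ha (add_right_cancel hab)
  · rw [map_add, map_add, hah] at hab
    exact hb (add_left_cancel hab)

theorem Algebra.algebraMap_norm_eq_mul_of_finrank_eq_two {F K : Type*} [Field F] [Field K]
    [Algebra F K] (hrank : Module.finrank F K = 2) {σ : K ≃ₐ[F] K} (hσ : σ ≠ AlgEquiv.refl)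
    (x : K) : algebraMap F K (Algebra.norm F x) = x * σ x := by
  classical
  have : FiniteDimensional F K := Module.finite_of_finrank_eq_succ hrank
  have huniv : (Finset.univ : Finset (K ≃ₐ[F] K)) = {AlgEquiv.refl, σ} :=
    (Finset.eq_of_subset_of_card_le (Finset.subset_univ _) (by
      rw [Finset.card_univ, Finset.card_pair hσ.symm, ← hrank]
      exact AlgEquiv.card_le)).symm
  have : IsGalois F K := IsGalois.of_card_aut_eq_finrank F K (by
    rw [Nat.card_eq_fintype_card, ← Finset.card_univ, huniv, Finset.card_pair hσ.symm, hrank])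
  rw [Algebra.norm_eq_prod_automorphisms, huniv, Finset.prod_pair hσ.symm]
  rfl

theorem AddMonoidHom.eq_mul_or_eq_mul_map_of_mul_map_eq {K : Type*} [CommRing K]
    [NoZeroDivisors K] (σ : K →+* K) (γ : K →+ K) (hγ : ∀ x, γ x * σ (γ x) = x * σ x) (x : K) :
    γ x = γ 1 * x ∨ γ x = γ 1 * σ x := by
  set α := γ 1
  have hα : α * σ α = 1 := by simpa using hγ 1
  have hpolar : γ x * σ α + α * σ (γ x) = x + σ x := by
    have h := hγ (x + 1)
    rw [map_add γ, map_add σ, map_add σ, map_one σ] at h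
    linear_combination h - hγ x - hα
  have hfac : (γ x - α * x) * (γ x - α * σ x) = 0 := by
    linear_combination (α * γ x) * hpolar - α ^ 2 * hγ x - γ x ^ 2 * hα
  rcases mul_eq_zero.mp hfac with h | h
  · exact Or.inl (sub_eq_zero.mp h)
  · exact Or.inr (sub_eq_zero.mp h)

theorem norm_isometry_eq_mul_or_mul_conj_general {F K : Type*} [Field F] [Field K] [Algebra F K]
    (hrank : Module.finrank F K = 2)
    (σ : K ≃ₐ[F] K) (hσ : σ ≠ AlgEquiv.refl)
    (γ : K →ₗ[F] K) (hγ : ∀ x : K, Algebra.norm F (γ x) = Algebra.norm F x) :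
    ∃ α : K, Algebra.norm F α = 1 ∧
      ((∀ x : K, γ x = α * x) ∨ (∀ x : K, γ x = α * σ x)) := by
  have hnorm := Algebra.algebraMap_norm_eq_mul_of_finrank_eq_two hrank hσ
  have hγσ : ∀ x, γ x * σ (γ x) = x * σ x := fun x => by rw [← hnorm, ← hnorm, hγ]
  refine ⟨γ 1, by simpa using hγ 1, ?_⟩
  rcases AddMonoidHom.eq_or_eq_of_forall_eq_or_eq (f := γ.toAddMonoidHom)
      (g := AddMonoidHom.mulLeft (γ 1)) (h := (AddMonoidHom.mulLeft (γ 1)).comp σ.toAddMonoidHom)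
      (AddMonoidHom.eq_mul_or_eq_mul_map_of_mul_map_eq σ.toRingHom γ.toAddMonoidHom hγσ) with h | h
  · exact Or.inl (DFunLike.congr_fun h)
  · exact Or.inr (DFunLike.congr_fun h)

/-- (Lemma 8.3, classification of isometries of the norm form.)
Let `K/F` be a quadratic extension of fields of characteristic `≠ 2` and `σ` the
nontrivial `F`-algebra automorphism of `K`.  Any `F`-linear map `γ : K → K` preserving
the norm form `Norm_{K/F}` is either multiplication by a norm-one element `α`, or such a
multiplication composed with `σ`. -/
theorem norm_isometry_eq_mul_or_mul_conj {F K : Type*} [Field F] [Field K] [Algebra F K]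
    (hchar : (2 : F) ≠ 0) (hrank : Module.finrank F K = 2)
    (σ : K ≃ₐ[F] K) (hσ : σ ≠ AlgEquiv.refl)
    (γ : K →ₗ[F] K) (hγ : ∀ x : K, Algebra.norm F (γ x) = Algebra.norm F x) :
    ∃ α : K, Algebra.norm F α = 1 ∧
      ((∀ x : K, γ x = α * x) ∨ (∀ x : K, γ x = α * σ x)) :=
  norm_isometry_eq_mul_or_mul_conj_general hrank σ hσ γ hγ
end

section
/- Let K/F be a CM extension of number fields, and let u ∈ (𝓞_K)ˣ be a unit such that Norm_{K/F}(u) = v² for some unit v ∈ (𝓞_F)ˣ. Then u can be written as u = w·ζ where w ∈ (𝓞_F)ˣ (viewed as a unit of 𝓞_K) and ζ ∈ (𝓞_K)ˣ has finite order (is a root of unity). -/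
open NumberField

/-! Dividing `u` by the image of `v` leaves a unit `ζ` of relative norm `1`. Every complex
embedding `ψ` of `K` restricts to a real embedding of `F`, and `ψ` and its complex conjugate are
then the two `F`-embeddings of `K`, so `ψ (N x) = |ψ x|²`. Hence `|ψ ζ| = 1` for all `ψ`, and by
Kronecker's theorem the algebraic integer `ζ` is a root of unity. -/

namespace NumberField.ComplexEmbedding

variable {F K : Type*} [Field F] [Field K] [Algebra F K] {ψ : K →+* ℂ}

theorem comp_algebraMap_norm_eq_mul_conj [Algebra.IsSeparable F K]
    (hrank : Module.finrank F K = 2) (hF : IsReal (ψ.comp (algebraMap F K))) (hK : ¬ IsReal ψ)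
    (x : K) : ψ (algebraMap F K (Algebra.norm F x)) = ψ x * starRingEnd ℂ (ψ x) := by
  classical
  have : FiniteDimensional F K := Module.finite_of_finrank_eq_succ hrank
  let : Algebra F ℂ := (ψ.comp (algebraMap F K)).toAlgebra
  let σ : K →ₐ[F] ℂ := { toRingHom := ψ, commutes' := fun _ ↦ rfl }
  let τ : K →ₐ[F] ℂ :=
    { toRingHom := conjugate ψ
      commutes' := fun a ↦ RingHom.congr_fun (isReal_iff.mp hF) a }
  have hστ : σ ≠ τ := fun h ↦ hK <| isReal_iff.mpr <| RingHom.ext fun y ↦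
    (congrArg (· y) h).symm
  have huniv : (Finset.univ : Finset (K →ₐ[F] ℂ)) = {σ, τ} :=
    (Finset.eq_univ_of_card _ (by rw [Finset.card_pair hστ, AlgHom.card, hrank])).symm
  have h := Algebra.norm_eq_prod_embeddings F ℂ x
  rwa [huniv, Finset.prod_pair hστ] at h

theorem norm_apply_eq_one_of_algebraNorm_eq_one [Algebra.IsSeparable F K]
    (hrank : Module.finrank F K = 2) (hF : IsReal (ψ.comp (algebraMap F K))) (hK : ¬ IsReal ψ)
    {x : K} (hx : Algebra.norm F x = 1) : ‖ψ x‖ = 1 := by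
  have h := comp_algebraMap_norm_eq_mul_conj hrank hF hK x
  rw [hx, map_one, map_one, Complex.mul_conj'] at h
  exact (pow_eq_one_iff_of_nonneg (norm_nonneg _) two_ne_zero).mp (by exact_mod_cast h.symm)

end NumberField.ComplexEmbedding

open ComplexEmbedding in
theorem NumberField.Units.isOfFinOrder_of_algebraNorm_eq_one {F K : Type*} [Field F]
    [NumberField F] [Field K] [NumberField K] [Algebra F K] (hrank : Module.finrank F K = 2)
    (htrF : ∀ φ : F →+* ℂ, IsReal φ) (htcK : ∀ ψ : K →+* ℂ, ¬ IsReal ψ) {ζ : (𝓞 K)ˣ}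
    (hζ : Algebra.norm F ((ζ : 𝓞 K) : K) = 1) : IsOfFinOrder ζ :=
  (CommGroup.mem_torsion _).mp <| (mem_torsion K).mpr <| (InfinitePlace.eq_iff_eq _ 1).mpr
    fun ψ ↦ norm_apply_eq_one_of_algebraNorm_eq_one hrank (htrF _) (htcK ψ) hζ

/-- For a CM extension `K/F` of number fields, any unit `u` of `𝓞 K`
whose relative norm is the square of a unit of `𝓞 F` factors as `u = w * ζ` with
`w` a unit of `𝓞 F` and `ζ` a root of unity of `K`. -/
theorem unit_eq_baseUnit_mul_rootOfUnity_of_norm_sq {F K : Type*} [Field F] [NumberField F]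
    [Field K] [NumberField K] [Algebra F K] (hrank : Module.finrank F K = 2)
    (htrF : ∀ φ : F →+* ℂ, ComplexEmbedding.IsReal φ)
    (htcK : ∀ ψ : K →+* ℂ, ¬ ComplexEmbedding.IsReal ψ)
    (u : (𝓞 K)ˣ) (v : (𝓞 F)ˣ)
    (hu : Algebra.norm F ((u : 𝓞 K) : K) = (((v : 𝓞 F) : F)) ^ 2) :
    ∃ (w : (𝓞 F)ˣ) (ζ : (𝓞 K)ˣ), IsOfFinOrder ζ ∧
      ((u : 𝓞 K) : K) = algebraMap F K ((w : 𝓞 F) : F) * ((ζ : 𝓞 K) : K) := by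
  let vK : (𝓞 K)ˣ := Units.map (algebraMap (𝓞 F) (𝓞 K)) v
  have hvK : ((vK : 𝓞 K) : K) = algebraMap F K ((v : 𝓞 F) : F) := rfl
  have hfac : ((u : 𝓞 K) : K) =
      algebraMap F K ((v : 𝓞 F) : F) * (((vK⁻¹ * u : (𝓞 K)ˣ) : 𝓞 K) : K) := by
    rw [← hvK, ← map_mul, ← Units.val_mul, mul_inv_cancel_left]
  refine ⟨v, vK⁻¹ * u, Units.isOfFinOrder_of_algebraNorm_eq_one hrank htrF htcK ?_, hfac⟩
  have h := congrArg (Algebra.norm F) hfac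
  rw [map_mul, Algebra.norm_algebraMap, hrank, hu] at h
  exact (mul_eq_left₀ (pow_ne_zero 2 (by simp))).mp h.symm
end

section
/- Let K/F be a CM extension of number fields. Then the relative norm Norm_{K/F} induces a group isomorphism between (𝓞_K)ˣ / ((𝓞_F)ˣ · μ_K) and Norm_{K/F}((𝓞_K)ˣ) / ((𝓞_F)ˣ)², where μ_K denotes the (finite) subgroup of elements of finite order in (𝓞_K)ˣ, (𝓞_F)ˣ is regarded as a subgroup of (𝓞_K)ˣ, and ((𝓞_F)ˣ)² = {v² : v ∈ (𝓞_F)ˣ} = Norm_{K/F}((𝓞_F)ˣ). -/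
/-! For a CM extension `K/F`, the two `F`-embeddings of `K` into `ℂ` above a complex embedding `ψ`
are `ψ` and `conj ∘ ψ`, so `ψ ∘ N_{K/F} = |ψ|²`. Hence a unit of `𝓞 K` has norm one exactly when
all its absolute values are one, i.e. when it is a root of unity; and on `(𝓞 F)ˣ` the norm is
squaring. The isomorphism is then the general `G ⧸ (S ⊔ ker N) ≃* N(G) ⧸ N(S)` for
`G = (𝓞 K)ˣ`, `S = (𝓞 F)ˣ`. -/

open NumberField Module ComplexEmbedding ComplexConjugate

theorem NumberField.ComplexEmbedding.algebraMap_norm_eq_mul_conj {F K : Type*} [Field F]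
    [Field K] [Algebra F K] (hrank : finrank F K = 2) {ψ : K →+* ℂ}
    (hF : IsReal (ψ.comp (algebraMap F K))) (hψ : ¬ IsReal ψ) (x : K) :
    ψ (algebraMap F K (Algebra.norm F x)) = ψ x * conj (ψ x) := by
  classical
  have : CharZero F := (ψ.comp (algebraMap F K)).charZero
  have : FiniteDimensional F K := .of_finrank_eq_succ hrank
  let : Algebra F ℂ := (ψ.comp (algebraMap F K)).toAlgebra
  let ψ₁ : K →ₐ[F] ℂ := { ψ with commutes' := fun _ => rfl }
  let ψ₂ : K →ₐ[F] ℂ :=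
    { (starRingEnd ℂ).comp ψ with commutes' := RingHom.congr_fun (isReal_iff.mp hF) }
  have hne : ψ₁ ≠ ψ₂ := fun h => hψ <| isReal_iff.mpr <| RingHom.ext fun y =>
    (AlgHom.congr_fun h y).symm
  have huniv : (Finset.univ : Finset (K →ₐ[F] ℂ)) = {ψ₁, ψ₂} := by
    refine (Finset.eq_univ_of_card _ ?_).symm
    rw [Finset.card_pair hne, AlgHom.card, hrank]
  have hprod := Algebra.norm_eq_prod_embeddings F ℂ x
  rwa [huniv, Finset.prod_pair hne] at hprod

namespace QuotientGroup

variable {G H : Type*} [CommGroup G] [CommGroup H] (f : G →* H) (S : Subgroup G)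

theorem ker_mk'_comp_rangeRestrict :
    ((mk' ((S.map f).subgroupOf f.range)).comp f.rangeRestrict).ker = S ⊔ f.ker := by
  rw [← MonoidHom.comap_ker, ker_mk', Subgroup.subgroupOf, Subgroup.comap_comap,
    MonoidHom.subtype_comp_rangeRestrict, Subgroup.comap_map_eq]

noncomputable def quotientSupKerMulEquiv :
    G ⧸ (S ⊔ f.ker) ≃* f.range ⧸ (S.map f).subgroupOf f.range :=
  (quotientMulEquivOfEq (ker_mk'_comp_rangeRestrict f S)).symm.trans <|
    quotientKerEquivOfSurjective _ <|
      (mk'_surjective _).comp f.rangeRestrict_surjective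

@[simp]
theorem quotientSupKerMulEquiv_apply_mk (g : G) :
    quotientSupKerMulEquiv f S g = (⟨f g, g, rfl⟩ : f.range) :=
  rfl

end QuotientGroup

section CMExtension

variable {F K : Type*} [Field F] [Field K] [Algebra F K]

theorem unitsMap_norm_comp_unitsMap_algebraMap (hrank : finrank F K = 2) :
    (Units.map (RingOfIntegers.norm F : 𝓞 K →* 𝓞 F)).comp
      (Units.map (algebraMap (𝓞 F) (𝓞 K)).toMonoidHom) = powMonoidHom 2 := by
  ext v
  simp [RingOfIntegers.norm_algebraMap, hrank]

theorem ker_unitsMap_norm_eq_torsion [NumberField K] (hrank : finrank F K = 2)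
    (htrF : ∀ φ : F →+* ℂ, IsReal φ) (htcK : ∀ ψ : K →+* ℂ, ¬ IsReal ψ) :
    (Units.map (RingOfIntegers.norm F : 𝓞 K →* 𝓞 F)).ker = CommGroup.torsion (𝓞 K)ˣ := by
  have hsq (ψ : K →+* ℂ) (x : K) : ψ (algebraMap F K (Algebra.norm F x)) = (‖ψ x‖ : ℂ) ^ 2 := by
    rw [algebraMap_norm_eq_mul_conj hrank (htrF _) (htcK ψ), Complex.mul_conj']
  obtain ⟨ψ₀⟩ : Nonempty (K →+* ℂ) := inferInstance
  ext u
  rw [MonoidHom.mem_ker, ← Units.torsion, Units.mem_torsion, InfinitePlace.eq_iff_eq _ 1,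
    Units.ext_iff, RingOfIntegers.ext_iff]
  simp only [Units.coe_map, RingOfIntegers.coe_norm, Units.val_one, map_one]
  constructor
  · intro h ψ
    have hsq_one : (‖ψ u‖ : ℂ) ^ 2 = 1 := by rw [← hsq, h, map_one, map_one]
    exact (pow_eq_one_iff_of_nonneg (norm_nonneg _) two_ne_zero).mp (by exact_mod_cast hsq_one)
  · intro h
    apply (ψ₀.comp (algebraMap F K)).injective
    simp [hsq, h]

end CMExtension

theorem norm_induces_units_quotient_mulEquiv_of_CM_general {F K : Type*} [Field F]
    [Field K] [NumberField K] [Algebra F K]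
    (hrank : Module.finrank F K = 2)
    (htrF : ∀ φ : F →+* ℂ, ComplexEmbedding.IsReal φ)
    (htcK : ∀ ψ : K →+* ℂ, ¬ ComplexEmbedding.IsReal ψ) :
    ((powMonoidHom 2 : (𝓞 F)ˣ →* (𝓞 F)ˣ).range
        = ((Units.map (RingOfIntegers.norm F : 𝓞 K →* 𝓞 F)).comp
            (Units.map (algebraMap (𝓞 F) (𝓞 K)).toMonoidHom)).range) ∧
    ∃ e : ((𝓞 K)ˣ ⧸ ((Units.map (algebraMap (𝓞 F) (𝓞 K)).toMonoidHom).range ⊔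
              CommGroup.torsion (𝓞 K)ˣ)) ≃*
          ((Units.map (RingOfIntegers.norm F : 𝓞 K →* 𝓞 F)).range ⧸
            ((powMonoidHom 2 : (𝓞 F)ˣ →* (𝓞 F)ˣ).range.subgroupOf
              (Units.map (RingOfIntegers.norm F : 𝓞 K →* 𝓞 F)).range)),
      ∀ u : (𝓞 K)ˣ,
        e (QuotientGroup.mk u) =
          QuotientGroup.mk
            ⟨Units.map (RingOfIntegers.norm F : 𝓞 K →* 𝓞 F) u, ⟨u, rfl⟩⟩ := by
  rw [← unitsMap_norm_comp_unitsMap_algebraMap hrank,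
    ← ker_unitsMap_norm_eq_torsion hrank htrF htcK, MonoidHom.range_comp]
  exact ⟨rfl, QuotientGroup.quotientSupKerMulEquiv _ _,
    QuotientGroup.quotientSupKerMulEquiv_apply_mk _ _⟩

/-- (Lemma 8.2.)  For a CM extension `K/F` of number fields, the
relative norm induces a group isomorphism
`(𝓞 K)ˣ / ((𝓞 F)ˣ · μ_K) ≃* Norm((𝓞 K)ˣ) / ((𝓞 F)ˣ)²`,
where `μ_K` is the torsion subgroup of `(𝓞 K)ˣ`, `(𝓞 F)ˣ` is viewed inside `(𝓞 K)ˣ`,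
and `((𝓞 F)ˣ)²` (the subgroup of squares) coincides with `Norm_{K/F}((𝓞 F)ˣ)`. -/
theorem norm_induces_units_quotient_mulEquiv_of_CM {F K : Type*} [Field F] [NumberField F]
    [Field K] [NumberField K] [Algebra F K] [FiniteDimensional F K]
    (hrank : Module.finrank F K = 2)
    (htrF : ∀ φ : F →+* ℂ, ComplexEmbedding.IsReal φ)
    (htcK : ∀ ψ : K →+* ℂ, ¬ ComplexEmbedding.IsReal ψ) :
    ((powMonoidHom 2 : (𝓞 F)ˣ →* (𝓞 F)ˣ).range
        = ((Units.map (RingOfIntegers.norm F : 𝓞 K →* 𝓞 F)).comp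
            (Units.map (algebraMap (𝓞 F) (𝓞 K)).toMonoidHom)).range) ∧
    ∃ e : ((𝓞 K)ˣ ⧸ ((Units.map (algebraMap (𝓞 F) (𝓞 K)).toMonoidHom).range ⊔
              CommGroup.torsion (𝓞 K)ˣ)) ≃*
          ((Units.map (RingOfIntegers.norm F : 𝓞 K →* 𝓞 F)).range ⧸
            ((powMonoidHom 2 : (𝓞 F)ˣ →* (𝓞 F)ˣ).range.subgroupOf
              (Units.map (RingOfIntegers.norm F : 𝓞 K →* 𝓞 F)).range)),
      ∀ u : (𝓞 K)ˣ,
        e (QuotientGroup.mk u) =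
          QuotientGroup.mk
            ⟨Units.map (RingOfIntegers.norm F : 𝓞 K →* 𝓞 F) u, ⟨u, rfl⟩⟩ :=
  norm_induces_units_quotient_mulEquiv_of_CM_general hrank htrF htcK
end

section
/- Let r ≥ 1 and let x : Fin r → ℂ. For each j with 1 ≤ j ≤ r−1 set P_j := x_j·x_{j+1}⋯x_{r−1}, and assume |P_j| < 1 for every such j. Then the family of complex numbers ∏_{i=0}^{r−1} (x_i)^{f(i)}, indexed by the set of functions f : Fin r → ℕ that are strictly increasing and satisfy f(0) = 0, is summable, and its sum equals ∏_{j=1}^{r−1} P_j/(1 − P_j). -/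
/-!
Writing a strictly increasing `f` with `f 0 = 0` through its gaps `g j = f (j + 1) - f j - 1`,
the exponent `f i = ∑_{j < i} (g j + 1)` turns `∏ i, x i ^ f i` into
`∏ j, P (j + 1) ^ (g j + 1)`, where `P (j + 1) = ∏_{i > j} x i`. The gaps range freely over
`Fin (r - 1) → ℕ`, so the sum factors as a product of geometric series
`∑ₖ P ^ (k + 1) = P / (1 - P)`.
-/

open Finset

section PiProduct

variable {n : ℕ} {κ : Fin n → Type*}

theorem summable_pi_prod_of_nonneg {a : ∀ i, κ i → ℝ} (ha : ∀ i k, 0 ≤ a i k)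
    (hs : ∀ i, Summable (a i)) : Summable fun g : (∀ i, κ i) => ∏ i, a i (g i) := by
  induction n with
  | zero => exact Summable.of_finite
  | succ n ih =>
    have hprod := (hs 0).mul_of_nonneg (ih (fun i => ha i.succ) fun i => hs i.succ) (ha 0)
      fun g => prod_nonneg fun i _ => ha i.succ (g i)
    rw [← (Fin.consEquiv κ).summable_iff]
    exact hprod.congr fun p => by simp [Fin.prod_univ_succ]

variable {R : Type*} [NormedCommRing R] [NormOneClass R] {F : ∀ i, κ i → R}

theorem summable_norm_pi_prod (hF : ∀ i, Summable fun k => ‖F i k‖) :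
    Summable fun g : (∀ i, κ i) => ‖∏ i, F i (g i)‖ :=
  (summable_pi_prod_of_nonneg (fun i k => norm_nonneg (F i k)) hF).of_nonneg_of_le
    (fun _ => norm_nonneg _) fun _ => norm_prod_le _ _

theorem tsum_pi_prod [CompleteSpace R] (hF : ∀ i, Summable fun k => ‖F i k‖) :
    ∑' g : (∀ i, κ i), ∏ i, F i (g i) = ∏ i, ∑' k, F i k := by
  induction n with
  | zero => simp
  | succ n ih =>
    rw [← (Fin.consEquiv κ).tsum_eq, Fin.prod_univ_succ, ← ih fun i => hF i.succ,
      tsum_mul_tsum_of_summable_norm (hF 0) (summable_norm_pi_prod fun i => hF i.succ)]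
    simp only [Fin.consEquiv_apply, Fin.prod_univ_succ, Fin.cons_zero, Fin.cons_succ]

end PiProduct

theorem summable_norm_pow_succ {K : Type*} [NormedDivisionRing K] {z : K} (hz : ‖z‖ < 1) :
    Summable fun k : ℕ => ‖z ^ (k + 1)‖ := by
  simpa only [norm_pow] using
    (summable_nat_add_iff 1).mpr (summable_geometric_of_lt_one (norm_nonneg z) hz)

theorem tsum_pow_succ_eq_div {K : Type*} [NormedField K] {z : K} (hz : ‖z‖ < 1) :
    ∑' k : ℕ, z ^ (k + 1) = z / (1 - z) := by
  simp_rw [pow_succ', tsum_mul_left, tsum_geometric_of_norm_lt_one hz, div_eq_mul_inv]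

section Gaps

variable {m : ℕ}

def sumGaps (g : Fin m → ℕ) (i : Fin (m + 1)) : ℕ :=
  ∑ j : Fin m, if (j : ℕ) < i then g j + 1 else 0

def gaps (f : Fin (m + 1) → ℕ) (j : Fin m) : ℕ :=
  f j.succ - f j.castSucc - 1

@[simp]
theorem sumGaps_zero (g : Fin m → ℕ) : sumGaps g 0 = 0 := by
  simp [sumGaps]

theorem sumGaps_succ (g : Fin m → ℕ) (j : Fin m) :
    sumGaps g j.succ = sumGaps g j.castSucc + (g j + 1) := by
  have hsplit : ∀ k : Fin m, (if (k : ℕ) < j + 1 then g k + 1 else 0) =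
      (if (k : ℕ) < j then g k + 1 else 0) + if k = j then g k + 1 else 0 := by
    intro k
    split_ifs <;> omega
  simp only [sumGaps, Fin.val_succ, Fin.val_castSucc, hsplit, sum_add_distrib, sum_ite_eq',
    mem_univ, if_true]

theorem strictMono_sumGaps (g : Fin m → ℕ) : StrictMono (sumGaps g) :=
  Fin.strictMono_iff_lt_succ.mpr fun j => by rw [sumGaps_succ]; omega

theorem gaps_sumGaps (g : Fin m → ℕ) : gaps (sumGaps g) = g := by
  funext j
  rw [gaps, sumGaps_succ]
  omega

theorem sumGaps_gaps {f : Fin (m + 1) → ℕ} (hf : StrictMono f) (h0 : f 0 = 0) :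
    sumGaps (gaps f) = f := by
  funext i
  induction i using Fin.induction with
  | zero => rw [sumGaps_zero, h0]
  | succ j ih =>
    have := hf j.castSucc_lt_succ
    rw [sumGaps_succ, ih, gaps]
    omega

def gapsEquiv (m : ℕ) : (Fin m → ℕ) ≃ {f : Fin (m + 1) → ℕ // StrictMono f ∧ f 0 = 0} where
  toFun g := ⟨sumGaps g, strictMono_sumGaps g, sumGaps_zero g⟩
  invFun f := gaps f.1
  left_inv := gaps_sumGaps
  right_inv f := Subtype.ext (sumGaps_gaps f.2.1 f.2.2)

theorem prod_pow_sumGaps {M : Type*} [CommMonoid M] (x : Fin (m + 1) → M) (g : Fin m → ℕ) :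
    ∏ i, x i ^ sumGaps g i =
      ∏ j : Fin m, (∏ i ∈ univ.filter fun i : Fin (m + 1) => (j : ℕ) < i, x i) ^ (g j + 1) := by
  simp_rw [sumGaps, ← prod_pow_eq_pow_sum, pow_ite, pow_zero]
  rw [prod_comm]
  simp_rw [prod_ite, prod_const_one, mul_one, prod_pow]

end Gaps

/-- (Geometric-series core of Theorem 5.1.)  Let `r ≥ 1`,
`x : Fin r → ℂ`, and for `1 ≤ j ≤ r - 1` let `P j = x j * x (j+1) * ⋯ * x (r-1)`;
assume `|P j| < 1` for all such `j`.  Then the family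
`f ↦ ∏ i, (x i) ^ (f i)`, indexed by strictly increasing `f : Fin r → ℕ` with `f 0 = 0`,
is summable, with sum `∏_{j=1}^{r-1} P j / (1 - P j)`. -/
theorem summable_prod_pow_strictMono_and_tsum_eq {r : ℕ} (hr : 1 ≤ r) (x : Fin r → ℂ)
    (P : ℕ → ℂ)
    (hP : ∀ j, P j = ∏ i ∈ Finset.univ.filter (fun i : Fin r => j ≤ (i : ℕ)), x i)
    (hlt : ∀ j, 1 ≤ j → j ≤ r - 1 → ‖P j‖ < 1) :
    Summable (fun f : {f : Fin r → ℕ // StrictMono f ∧ f ⟨0, hr⟩ = 0} =>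
        ∏ i, x i ^ (f.1 i)) ∧
    ∑' f : {f : Fin r → ℕ // StrictMono f ∧ f ⟨0, hr⟩ = 0}, ∏ i, x i ^ (f.1 i)
      = ∏ j ∈ Finset.Ico 1 r, P j / (1 - P j) := by
  obtain ⟨m, rfl⟩ := Nat.exists_eq_add_of_le' hr
  have hnorm (j : Fin m) : ‖P (j + 1)‖ < 1 := hlt _ le_add_self (by omega)
  have hterm (g : Fin m → ℕ) : ∏ i, x i ^ sumGaps g i = ∏ j : Fin m, P (j + 1) ^ (g j + 1) := by
    simp only [prod_pow_sumGaps, hP, Nat.add_one_le_iff]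
  have hgeom (j : Fin m) := summable_norm_pow_succ (hnorm j)
  have hsum := summable_norm_pi_prod (F := fun (j : Fin m) (k : ℕ) => P (j + 1) ^ (k + 1)) hgeom
  refine ⟨(gapsEquiv m).summable_iff.mp (hsum.of_norm.congr fun g => (hterm g).symm), ?_⟩
  refine ((gapsEquiv m).tsum_eq fun f => ∏ i, x i ^ f.1 i).symm.trans ?_
  simp only [gapsEquiv, Equiv.coe_fn_mk, hterm]
  rw [tsum_pi_prod hgeom, prod_Ico_eq_prod_range, Nat.add_sub_cancel,
    ← Fin.prod_univ_eq_prod_range]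
  exact prod_congr rfl fun j _ => by rw [add_comm 1 (j : ℕ), tsum_pow_succ_eq_div (hnorm j)]
end
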